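/- Let (n, ⟨·,·⟩) be a finite-dimensional real nilpotent Lie algebra with an inner product, and let Ric^n be its Ricci operator, defined by ⟨Ric^n X, Y⟩ = (1/4)·Σ_{i,j} ⟨X, [E_i, E_j]⟩·⟨Y, [E_i, E_j]⟩ − (1/2)·Σ_{i,j} ⟨[X, E_i], E_j⟩·⟨[Y, E_i], E_j⟩ for any orthonormal basis {E_i} of n. If I ⊆ n is an abelian Lie ideal of codimension one, then Tr(Ric^n π_I) = 0, where π_I is the orthogonal projection of n onto I; equivalently, Σ_j ⟨Ric^n e_j, e_j⟩ = 0 for any orthonormal basis {e_j} of I. -/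

import Mathlib

open scoped BigOperators

/-- `B` is an inner product on `n`: a symmetric, positive-definite bilinear form. -/
def IsInnerProduct {n : Type*} [AddCommGroup n] [Module ℝ n]
    (B : LinearMap.BilinForm ℝ n) : Prop :=
  (∀ x y : n, B x y = B y x) ∧ (∀ x : n, x ≠ 0 → 0 < B x x)

/-- The basis `E` is orthonormal with respect to the bilinear form `B`. -/
def IsOrthonormalBasis {n : Type*} [AddCommGroup n] [Module ℝ n] {ι : Type*}
    (B : LinearMap.BilinForm ℝ n) (E : Module.Basis ι ℝ n) : Prop :=
  (∀ i, B (E i) (E i) = 1) ∧ ∀ i j, i ≠ j → B (E i) (E j) = 0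

/-- The Ricci form `⟨Ric^n X, Y⟩` of a metric nilpotent Lie algebra `(n, B)`, computed in the
orthonormal basis `E`. -/
noncomputable def ricNilForm {n : Type*} [LieRing n] [LieAlgebra ℝ n] {ι : Type*} [Fintype ι]
    (B : LinearMap.BilinForm ℝ n) (E : Module.Basis ι ℝ n) (X Y : n) : ℝ :=
  (1/4) * ∑ i, ∑ j, (B X ⁅E i, E j⁆) * (B Y ⁅E i, E j⁆)
    - (1/2) * ∑ i, ∑ j, (B ⁅X, E i⁆ (E j)) * (B ⁅Y, E i⁆ (E j))

/-!
Let `Z` be a unit vector orthogonal to `I` and `D = ad Z`. Since `I` is abelian of codimension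
one, every bracket is determined by `D`: `[X, Y] = ⟨Z, X⟩ DY - ⟨Z, Y⟩ DX`, and `D` maps `n` into
`I`. Summed over an orthonormal basis `{e_j}` of `I`, the first term of the Ricci form becomes
`(1/4) · 2 ‖D‖²` by Lagrange's identity (the cross term is `|DZ|² = 0`), and the second becomes
`(1/2) ‖D‖²`, where `‖D‖² = Σ |D E_i|²` is the Hilbert–Schmidt norm, which may equally be computed
in the orthonormal basis `{Z} ∪ {e_j}`. The two contributions cancel.
-/

open Module Submodule Set

section Bilinear

variable {V : Type*} [AddCommGroup V] [Module ℝ V]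

def IsOrthonormalFamily (B : LinearMap.BilinForm ℝ V) {κ : Type*} (f : κ → V) : Prop :=
  (∀ j, B (f j) (f j) = 1) ∧ ∀ j k, j ≠ k → B (f j) (f k) = 0

def IsParsevalFrame (B : LinearMap.BilinForm ℝ V) {κ : Type*} [Fintype κ] (e : κ → V) : Prop :=
  ∀ x y, ∑ j, B x (e j) * B y (e j) = B x y

variable {B : LinearMap.BilinForm ℝ V} {κ : Type*} [Fintype κ] {f : κ → V}

theorem IsOrthonormalFamily.apply_sum_smul (hf : IsOrthonormalFamily B f) (c : κ → ℝ) (k : κ) :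
    B (∑ l, c l • f l) (f k) = c k := by
  simp only [map_sum, map_smul, LinearMap.sum_apply, LinearMap.smul_apply, smul_eq_mul]
  rw [Finset.sum_eq_single k (fun l _ hl => by rw [hf.2 l k hl, mul_zero]) (by simp), hf.1,
    mul_one]

theorem IsOrthonormalFamily.sum_smul_of_mem_span (hf : IsOrthonormalFamily B f) {x : V}
    (hx : x ∈ span ℝ (range f)) : ∑ k, B x (f k) • f k = x := by
  obtain ⟨c, rfl⟩ := (mem_span_range_iff_exists_fun ℝ).1 hx
  simp only [hf.apply_sum_smul]

theorem IsOrthonormalFamily.sum_mul_of_mem_span (hf : IsOrthonormalFamily B f) {x : V}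
    (hx : x ∈ span ℝ (range f)) (y : V) : ∑ k, B x (f k) * B y (f k) = B y x := by
  conv_rhs => rw [← hf.sum_smul_of_mem_span hx]
  simp only [map_sum, map_smul, smul_eq_mul]

theorem IsOrthonormalFamily.apply_sub_sum_smul (hf : IsOrthonormalFamily B f) (y : V) (k : κ) :
    B (y - ∑ l, B y (f l) • f l) (f k) = 0 := by
  rw [map_sub, LinearMap.sub_apply, hf.apply_sum_smul, sub_self]

theorem IsOrthonormalFamily.isParsevalFrame (hB : ∀ x y, B x y = B y x)
    (hf : IsOrthonormalFamily B f) (hspan : ∀ x, x ∈ span ℝ (range f)) :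
    IsParsevalFrame B f := fun x y => by
  rw [hf.sum_mul_of_mem_span (hspan x), hB]

theorem apply_eq_zero_of_mem_span {ι : Type*} {e : ι → V} {Z w : V} (hZe : ∀ i, B Z (e i) = 0)
    (hw : w ∈ span ℝ (range e)) : B Z w = 0 :=
  (span_le (p := LinearMap.ker (B Z))).2 (range_subset_iff.2 hZe) hw

theorem IsOrthonormalFamily.isParsevalFrame_option_elim (hB : ∀ x y, B x y = B y x)
    (hf : IsOrthonormalFamily B f) {Z : V} (hZf : ∀ k, B Z (f k) = 0)
    (hdec : ∀ x, x - B Z x • Z ∈ span ℝ (range f)) :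
    IsParsevalFrame B (fun o : Option κ => o.elim Z f) := by
  intro x y
  have hpars := hf.sum_mul_of_mem_span (hdec x) y
  simp only [map_sub, map_smul, LinearMap.sub_apply, LinearMap.smul_apply, hZf, smul_eq_mul,
    mul_zero, sub_zero] at hpars
  simp only [Fintype.sum_option, Option.elim_none, Option.elim_some]
  rw [hpars, hB y x, hB x Z, hB y Z]
  ring

theorem IsParsevalFrame.sum_apply_self_eq (hB : ∀ x y, B x y = B y x) {e : κ → V}
    (he : IsParsevalFrame B e) {ι : Type*} [Fintype ι] {E : ι → V}
    (hE : ∀ x, ∑ i, B x (E i) • E i = x) (C : LinearMap.BilinForm ℝ V) :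
    ∑ j, C (e j) (e j) = ∑ i, C (E i) (E i) := by
  have hexpand : ∀ x, C x x = ∑ i, ∑ i', B x (E i) * B x (E i') * C (E i) (E i') := fun x => by
    conv_lhs => rw [← hE x]
    simp only [map_sum, map_smul, LinearMap.sum_apply, LinearMap.smul_apply, smul_eq_mul,
      Finset.mul_sum]
    rw [Finset.sum_comm]
    exact Finset.sum_congr rfl fun i _ => Finset.sum_congr rfl fun i' _ => by ring
  have hdiag : ∀ i, ∑ i', B (E i) (E i') * C (E i) (E i') = C (E i) (E i) := fun i => by
    conv_rhs => arg 2; rw [← hE (E i)]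
    simp only [map_sum, map_smul, smul_eq_mul]
  calc ∑ j, C (e j) (e j)
      = ∑ j, ∑ i, ∑ i', B (e j) (E i) * B (e j) (E i') * C (E i) (E i') :=
        Finset.sum_congr rfl fun j _ => hexpand (e j)
    _ = ∑ i, ∑ i', B (E i) (E i') * C (E i) (E i') := by
        rw [Finset.sum_comm]
        refine Finset.sum_congr rfl fun i _ => ?_
        rw [Finset.sum_comm]
        refine Finset.sum_congr rfl fun i' _ => ?_
        rw [← Finset.sum_mul, ← he]
        simp only [hB (e _)]
    _ = ∑ i, C (E i) (E i) := Finset.sum_congr rfl fun i _ => hdiag i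

/-- Lagrange's identity. -/
theorem sum_sum_apply_smul_sub_smul_self (hB : ∀ x y, B x y = B y x) {ι : Type*} [Fintype ι]
    (a : ι → ℝ) (w : ι → V) :
    ∑ i, ∑ j, B (a i • w j - a j • w i) (a i • w j - a j • w i)
      = 2 * ((∑ i, a i * a i) * ∑ j, B (w j) (w j)
        - B (∑ i, a i • w i) (∑ i, a i • w i)) := by
  have hexpand : ∀ i j, B (a i • w j - a j • w i) (a i • w j - a j • w i)
      = a i * a i * B (w j) (w j) + B (w i) (w i) * (a j * a j)
        - 2 * (a i * a j * B (w i) (w j)) := fun i j => by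
    simp only [map_sub, map_smul, LinearMap.sub_apply, LinearMap.smul_apply, smul_eq_mul,
      hB (w j) (w i)]
    ring
  have hcross : B (∑ i, a i • w i) (∑ i, a i • w i)
      = ∑ i, ∑ j, a i * a j * B (w i) (w j) := by
    simp only [map_sum, map_smul, LinearMap.sum_apply, LinearMap.smul_apply, smul_eq_mul,
      Finset.mul_sum]
    rw [Finset.sum_comm]
    exact Finset.sum_congr rfl fun i _ => Finset.sum_congr rfl fun j _ => by ring
  simp only [hexpand, Finset.sum_add_distrib, Finset.sum_sub_distrib, ← Finset.mul_sum,
    ← Finset.sum_mul, hcross]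
  ring

theorem exists_unit_orthogonal_of_span_ne_top (hB : IsInnerProduct B)
    (hf : IsOrthonormalFamily B f) (hspan : span ℝ (range f) ≠ ⊤) :
    ∃ Z, B Z Z = 1 ∧ ∀ k, B Z (f k) = 0 := by
  obtain ⟨y, hy⟩ := SetLike.exists_not_mem_of_ne_top _ hspan
  set z := y - ∑ l, B y (f l) • f l
  have hz : z ≠ 0 := fun h => hy <| sub_eq_zero.1 h ▸
    sum_mem fun l _ => smul_mem _ _ (subset_span (mem_range_self l))
  have hzz := hB.2 z hz
  refine ⟨(√(B z z))⁻¹ • z, ?_, fun k => ?_⟩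
  · simp only [map_smul, LinearMap.smul_apply, smul_eq_mul]
    field_simp
    rw [Real.sq_sqrt hzz.le]
  · simp only [map_smul, LinearMap.smul_apply, smul_eq_mul]
    exact mul_eq_zero_of_right _ (hf.apply_sub_sum_smul y k)

theorem sub_smul_mem_of_finrank_add_one {W : Submodule ℝ V}
    (hcodim : finrank ℝ W + 1 = finrank ℝ V) {Z : V} (hZZ : B Z Z = 1)
    (hZW : ∀ w ∈ W, B Z w = 0) (x : V) : x - B Z x • Z ∈ W := by
  have : FiniteDimensional ℝ V := Module.finite_of_finrank_pos (by omega)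
  have hZ : Z ∉ W := fun h => by simp [hZW Z h] at hZZ
  have hsup : W ⊔ span ℝ {Z} = ⊤ := by
    have hlt := finrank_lt_finrank_of_lt (lt_sup_iff_notMem.2 hZ)
    have hle := finrank_le (W ⊔ span ℝ {Z})
    exact eq_top_of_finrank_eq (by omega)
  obtain ⟨w, hw, z, hz, rfl⟩ := mem_sup.1 (hsup ▸ mem_top : x ∈ W ⊔ span ℝ {Z})
  obtain ⟨t, rfl⟩ := mem_span_singleton.1 hz
  have ht : B Z (w + t • Z) = t := by
    simp only [map_add, map_smul, smul_eq_mul, hZW w hw, hZZ, mul_one, zero_add]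
  rwa [ht, add_sub_cancel_right]

theorem exists_unit_normal_of_finrank_add_one (hB : IsInnerProduct B)
    (hf : IsOrthonormalFamily B f)
    (hcodim : finrank ℝ (span ℝ (range f)) + 1 = finrank ℝ V) :
    ∃ Z, B Z Z = 1 ∧ (∀ k, B Z (f k) = 0) ∧ ∀ x, x - B Z x • Z ∈ span ℝ (range f) := by
  have hspan : span ℝ (range f) ≠ ⊤ := fun h => by
    rw [h, finrank_top] at hcodim
    omega
  obtain ⟨Z, hZZ, hZf⟩ := exists_unit_orthogonal_of_span_ne_top hB hf hspan
  exact ⟨Z, hZZ, hZf, sub_smul_mem_of_finrank_add_one hcodim hZZ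
    fun _ => apply_eq_zero_of_mem_span hZf⟩

end Bilinear

section Lie

variable {L : Type*} [LieRing L] [LieAlgebra ℝ L] {I : LieIdeal ℝ L}

theorem lie_eq_zero_of_mem_of_isLieAbelian (habelian : IsLieAbelian I) {u v : L} (hu : u ∈ I)
    (hv : v ∈ I) : ⁅u, v⁆ = 0 := by
  have h := LieSubmodule.lie_mem_lie hu hv
  rwa [(LieSubmodule.lie_abelian_iff_lie_self_eq_bot I).1 habelian, LieSubmodule.mem_bot] at h

variable {Z : L} {φ : L → ℝ}

theorem lie_mem_of_forall_sub_smul_mem (hdec : ∀ x, x - φ x • Z ∈ I) (y : L) : ⁅Z, y⁆ ∈ I := by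
  have h : ⁅Z, y⁆ = ⁅Z, y - φ y • Z⁆ := by rw [lie_sub, lie_smul, lie_self, smul_zero, sub_zero]
  exact h ▸ I.lie_mem (hdec y)

theorem lie_eq_smul_lie_sub_smul_lie (habelian : IsLieAbelian I) (hdec : ∀ x, x - φ x • Z ∈ I)
    (x y : L) : ⁅x, y⁆ = φ x • ⁅Z, y⁆ - φ y • ⁅Z, x⁆ := by
  rw [← sub_eq_zero, ← lie_eq_zero_of_mem_of_isLieAbelian habelian (hdec x) (hdec y)]
  simp only [sub_lie, lie_sub, smul_lie, lie_smul, lie_self, smul_zero, sub_zero,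
    ← lie_skew x Z, smul_neg]
  abel

end Lie

section Ricci

variable {L : Type*} [LieRing L] [LieAlgebra ℝ L] {B : LinearMap.BilinForm ℝ L}
  {ι : Type*} [Fintype ι] {E : Basis ι ℝ L} {I : LieIdeal ℝ L} {Z : L}

theorem sum_sum_apply_lie_mul_self_eq (hB : ∀ x y, B x y = B y x) (hE : IsOrthonormalBasis B E)
    (habelian : IsLieAbelian I) (hZZ : B Z Z = 1) (hdec : ∀ x, x - B Z x • Z ∈ I) {X : L}
    (hX : B Z X = 0) :
    ∑ i, ∑ j, B ⁅X, E i⁆ (E j) * B ⁅X, E i⁆ (E j) = B ⁅Z, X⁆ ⁅Z, X⁆ := by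
  have hpars : IsParsevalFrame B E := IsOrthonormalFamily.isParsevalFrame hB hE E.mem_span
  have hXE : ∀ i, ⁅X, E i⁆ = -(B Z (E i) • ⁅Z, X⁆) := fun i => by
    rw [lie_eq_smul_lie_sub_smul_lie habelian hdec, hX, zero_smul, zero_sub]
  calc ∑ i, ∑ j, B ⁅X, E i⁆ (E j) * B ⁅X, E i⁆ (E j)
      = ∑ i, B ⁅X, E i⁆ ⁅X, E i⁆ := Finset.sum_congr rfl fun i _ => hpars _ _
    _ = (∑ i, B Z (E i) * B Z (E i)) * B ⁅Z, X⁆ ⁅Z, X⁆ := by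
        rw [Finset.sum_mul]
        refine Finset.sum_congr rfl fun i _ => ?_
        simp only [hXE, map_neg, map_smul, LinearMap.neg_apply, LinearMap.smul_apply,
          smul_eq_mul]
        ring
    _ = B ⁅Z, X⁆ ⁅Z, X⁆ := by rw [hpars, hZZ, one_mul]

theorem sum_sum_sum_apply_lie_mul_self_eq (hB : ∀ x y, B x y = B y x)
    (hE : IsOrthonormalBasis B E) (habelian : IsLieAbelian I) (hZZ : B Z Z = 1)
    (hdec : ∀ x, x - B Z x • Z ∈ I) {κ : Type*} [Fintype κ] {f : κ → L}
    (hf : IsOrthonormalFamily B f) (hfspan : ∀ x, x ∈ I ↔ x ∈ span ℝ (range f)) :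
    ∑ k, ∑ i, ∑ j, B (f k) ⁅E i, E j⁆ * B (f k) ⁅E i, E j⁆
      = 2 * ∑ i, B ⁅Z, E i⁆ ⁅Z, E i⁆ := by
  have hpars : IsParsevalFrame B E := IsOrthonormalFamily.isParsevalFrame hB hE E.mem_span
  have hEE : ∀ i j, ⁅E i, E j⁆ = B Z (E i) • ⁅Z, E j⁆ - B Z (E j) • ⁅Z, E i⁆ :=
    fun i j => lie_eq_smul_lie_sub_smul_lie habelian hdec _ _
  have hEEmem : ∀ i j, ⁅E i, E j⁆ ∈ span ℝ (range f) := fun i j => by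
    rw [← hfspan, hEE]
    exact sub_mem (smul_mem _ _ (lie_mem_of_forall_sub_smul_mem hdec _))
      (smul_mem _ _ (lie_mem_of_forall_sub_smul_mem hdec _))
  have hDZ : ∑ i, B Z (E i) • ⁅Z, E i⁆ = 0 := by
    simp_rw [← lie_smul, ← lie_sum, IsOrthonormalFamily.sum_smul_of_mem_span hE (E.mem_span Z),
      lie_self]
  calc ∑ k, ∑ i, ∑ j, B (f k) ⁅E i, E j⁆ * B (f k) ⁅E i, E j⁆
      = ∑ i, ∑ j, B ⁅E i, E j⁆ ⁅E i, E j⁆ := by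
        rw [Finset.sum_comm]
        refine Finset.sum_congr rfl fun i _ => ?_
        rw [Finset.sum_comm]
        refine Finset.sum_congr rfl fun j _ => ?_
        simp only [hB (f _)]
        exact hf.sum_mul_of_mem_span (hEEmem i j) _
    _ = 2 * ((∑ i, B Z (E i) * B Z (E i)) * ∑ j, B ⁅Z, E j⁆ ⁅Z, E j⁆
          - B (∑ i, B Z (E i) • ⁅Z, E i⁆) (∑ i, B Z (E i) • ⁅Z, E i⁆)) := by
        simp only [hEE]
        exact sum_sum_apply_smul_sub_smul_self hB _ _
    _ = 2 * ∑ i, B ⁅Z, E i⁆ ⁅Z, E i⁆ := by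
        rw [hpars, hZZ, hDZ, map_zero, one_mul, sub_zero]

theorem sum_apply_lie_basis_eq_sum_apply_lie (hB : ∀ x y, B x y = B y x)
    (hE : IsOrthonormalBasis B E) {κ : Type*} [Fintype κ] {f : κ → L} (hf : IsOrthonormalFamily B f)
    (hZf : ∀ k, B Z (f k) = 0) (hdec : ∀ x, x - B Z x • Z ∈ span ℝ (range f)) :
    ∑ i, B ⁅Z, E i⁆ ⁅Z, E i⁆ = ∑ k, B ⁅Z, f k⁆ ⁅Z, f k⁆ := by
  have h := (hf.isParsevalFrame_option_elim hB hZf hdec).sum_apply_self_eq hB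
    (fun x => IsOrthonormalFamily.sum_smul_of_mem_span hE (E.mem_span x))
    (B.compl₁₂ (LieAlgebra.ad ℝ L Z) (LieAlgebra.ad ℝ L Z))
  simpa [Fintype.sum_option, lie_self] using h.symm

end Ricci

theorem traceRic_abelian_codim_one_ideal_eq_zero_general
    (n : Type*) [LieRing n] [LieAlgebra ℝ n]
    (B : LinearMap.BilinForm ℝ n) (hB : IsInnerProduct B)
    {ι : Type*} [Fintype ι] (E : Module.Basis ι ℝ n) (hE : IsOrthonormalBasis B E)
    (I : LieIdeal ℝ n) (habelian : IsLieAbelian I)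
    (hcodim : Module.finrank ℝ I + 1 = Module.finrank ℝ n)
    {κ : Type*} [Fintype κ] (f : κ → n)
    (hf1 : ∀ j, B (f j) (f j) = 1) (hf0 : ∀ j k, j ≠ k → B (f j) (f k) = 0)
    (hfspan : ∀ x : n, x ∈ I ↔ x ∈ Submodule.span ℝ (Set.range f)) :
    ∑ j, ricNilForm B E (f j) (f j) = 0 := by
  have hf : IsOrthonormalFamily B f := ⟨hf1, hf0⟩
  have hIf : (I : Submodule ℝ n) = span ℝ (range f) := Submodule.ext hfspan
  obtain ⟨Z, hZZ, hZf, hdec⟩ := exists_unit_normal_of_finrank_add_one hB hf (hIf ▸ hcodim)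
  have hdecI : ∀ x, x - B Z x • Z ∈ I := fun x => (hfspan _).2 (hdec x)
  simp only [ricNilForm, Finset.sum_sub_distrib, ← Finset.mul_sum,
    sum_sum_sum_apply_lie_mul_self_eq hB.1 hE habelian hZZ hdecI hf hfspan,
    sum_sum_apply_lie_mul_self_eq hB.1 hE habelian hZZ hdecI (hZf _),
    sum_apply_lie_basis_eq_sum_apply_lie hB.1 hE hf hZf hdec]
  ring

/-- For a finite-dimensional real nilpotent metric Lie algebra `(n, B)` and an
abelian Lie ideal `I` of codimension one, `Tr(Ric^n π_I) = 0`; equivalently,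
`Σ_j ⟨Ric^n e_j, e_j⟩ = 0` for any orthonormal basis `{e_j}` of `I`. -/
theorem traceRic_abelian_codim_one_ideal_eq_zero
    (n : Type*) [LieRing n] [LieAlgebra ℝ n] [Module.Finite ℝ n]
    [LieRing.IsNilpotent n]
    (B : LinearMap.BilinForm ℝ n) (hB : IsInnerProduct B)
    {ι : Type*} [Fintype ι] (E : Module.Basis ι ℝ n) (hE : IsOrthonormalBasis B E)
    (I : LieIdeal ℝ n) (habelian : IsLieAbelian I)
    (hcodim : Module.finrank ℝ I + 1 = Module.finrank ℝ n)
    {κ : Type*} [Fintype κ] (f : κ → n) (hfI : ∀ j, f j ∈ I)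
    (hf1 : ∀ j, B (f j) (f j) = 1) (hf0 : ∀ j k, j ≠ k → B (f j) (f k) = 0)
    (hfspan : ∀ x : n, x ∈ I ↔ x ∈ Submodule.span ℝ (Set.range f)) :
    ∑ j, ricNilForm B E (f j) (f j) = 0 :=
  traceRic_abelian_codim_one_ideal_eq_zero_general n B hB E hE I habelian hcodim f hf1 hf0 hfspan
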